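/- arXiv:1504.02718 — 2 statements merged into one kernel-verified Lean document; each statement's English description precedes it below -/
import Mathlib

section
/- Let n be a natural number, let c₁,…,cₙ be positive real numbers, and let λ₁,…,λₙ be nonnegative real numbers with λ₁ + ⋯ + λₙ = 1. Then the limit as x tends to 0 from the right of ln(∑_{k=1}^n λₖcₖ^x)/x equals ∑_{k=1}^n λₖ ln cₖ. -/
/-! Since `∑ λₖ = 1`, the quotient is the difference quotient at `0` of `log ∘ f` with
`f x = ∑ λₖ cₖ^x` and `f 0 = 1`, so its limit is `(log ∘ f)'(0) = f'(0) = ∑ λₖ ln cₖ`. -/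

open Filter Topology

theorem HasDerivAt.tendsto_log_div_of_eq_one {f : ℝ → ℝ} {f' : ℝ} (hf : HasDerivAt f f' 0)
    (hf0 : f 0 = 1) : Tendsto (fun x => Real.log (f x) / x) (𝓝[≠] 0) (𝓝 f') := by
  have hlog : HasDerivAt (fun x => Real.log (f x)) f' 0 := by
    simpa [hf0] using hf.log (by rw [hf0]; exact one_ne_zero)
  simpa [hf0, div_eq_inv_mul] using hlog.tendsto_slope_zero

theorem hasDerivAt_sum_mul_rpow_zero {ι : Type*} (s : Finset ι) (c lam : ι → ℝ)
    (hc : ∀ k, 0 < c k) :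
    HasDerivAt (fun x : ℝ => ∑ k ∈ s, lam k * c k ^ x) (∑ k ∈ s, lam k * Real.log (c k)) 0 := by
  simpa using HasDerivAt.fun_sum fun k _ =>
    ((Real.hasStrictDerivAt_const_rpow (hc k) 0).hasDerivAt).const_mul (lam k)

theorem tendsto_log_sum_rpow_div_general
    (n : ℕ) (c lam : Fin n → ℝ) (hc : ∀ k, 0 < c k)
    (hsum : (∑ k, lam k) = 1) :
    Tendsto (fun x : ℝ => Real.log (∑ k, lam k * c k ^ x) / x)
      (𝓝[>] 0) (𝓝 (∑ k, lam k * Real.log (c k))) :=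
  ((hasDerivAt_sum_mul_rpow_zero _ c lam hc).tendsto_log_div_of_eq_one
    (by simpa using hsum)).mono_left (nhdsWithin_mono _ fun _ hx => ne_of_gt hx)

/-- `lim_{x→0⁺} ln(∑ λₖ cₖ^x)/x = ∑ λₖ ln cₖ` for positive `cₖ` and weights summing to 1. -/
theorem tendsto_log_sum_rpow_div
    (n : ℕ) (c lam : Fin n → ℝ) (hc : ∀ k, 0 < c k) (hlam : ∀ k, 0 ≤ lam k)
    (hsum : (∑ k, lam k) = 1) :
    Tendsto (fun x : ℝ => Real.log (∑ k, lam k * c k ^ x) / x)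
      (𝓝[>] 0) (𝓝 (∑ k, lam k * Real.log (c k))) :=
  tendsto_log_sum_rpow_div_general n c lam hc hsum
end

section
/- Let n be a natural number, let c₁,…,cₙ be positive real numbers, and let λ₁,…,λₙ be nonnegative real numbers with λ₁ + ⋯ + λₙ = 1. Then the limit as x tends to 0 from the right of (∑_{k=1}^n λₖcₖ^x)^{1/x} equals ∏_{k=1}^n cₖ^{λₖ}. -/
/-!
With `S x = ∑ λₖ cₖ^x` we have `S 0 = 1`, so `log (S x) / x` is a difference quotient of
`log ∘ S` at `0` and tends to `(log ∘ S)' 0 = S' 0 = ∑ λₖ log cₖ`; exponentiating gives the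
geometric mean.
-/

open Filter Topology

theorem HasDerivAt.tendsto_rpow_one_div_nhdsNE {f : ℝ → ℝ} {L : ℝ} (hf : HasDerivAt f L 0)
    (hf0 : f 0 = 1) : Tendsto (fun x => f x ^ (1 / x)) (𝓝[≠] 0) (𝓝 (Real.exp L)) := by
  have hlog : HasDerivAt (fun x => Real.log (f x)) L 0 := by
    simpa [hf0] using hf.log (by simp [hf0])
  have hslope : Tendsto (fun x => Real.log (f x) / x) (𝓝[≠] 0) (𝓝 L) :=
    (hasDerivAt_iff_tendsto_slope.mp hlog).congr fun x => by
      simp [slope_def_field, hf0]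
  have hpos : ∀ᶠ x in 𝓝[≠] 0, 0 < f x :=
    nhdsWithin_le_nhds <| hf.continuousAt.eventually <| lt_mem_nhds <| by simp [hf0]
  refine ((Real.continuous_exp.tendsto L).comp hslope).congr' ?_
  filter_upwards [hpos] with x hx
  rw [Function.comp_apply, Real.rpow_def_of_pos hx, one_div, div_eq_mul_inv]

theorem hasDerivAt_sum_mul_rpow {ι : Type*} (s : Finset ι) (w c : ι → ℝ)
    (hc : ∀ k ∈ s, 0 < c k) (x : ℝ) :
    HasDerivAt (fun y => ∑ k ∈ s, w k * c k ^ y)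
      (∑ k ∈ s, w k * (c k ^ x * Real.log (c k))) x :=
  HasDerivAt.fun_sum fun k hk =>
    (Real.hasStrictDerivAt_const_rpow (hc k hk) x).hasDerivAt.const_mul (w k)

theorem Real.exp_sum_mul_log {ι : Type*} (s : Finset ι) (w c : ι → ℝ)
    (hc : ∀ k ∈ s, 0 < c k) :
    Real.exp (∑ k ∈ s, w k * Real.log (c k)) = ∏ k ∈ s, c k ^ w k := by
  rw [Real.exp_sum]
  exact Finset.prod_congr rfl fun k hk => by rw [Real.rpow_def_of_pos (hc k hk), mul_comm]

theorem tendsto_power_mean_geometric_mean_general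
    (n : ℕ) (c lam : Fin n → ℝ) (hc : ∀ k, 0 < c k)
    (hsum : (∑ k, lam k) = 1) :
    Tendsto (fun x : ℝ => (∑ k, lam k * c k ^ x) ^ (1 / x))
      (𝓝[>] 0) (𝓝 (∏ k, c k ^ lam k)) := by
  have hderiv := hasDerivAt_sum_mul_rpow Finset.univ lam c (fun k _ => hc k) 0
  simp only [Real.rpow_zero, one_mul] at hderiv
  rw [← Real.exp_sum_mul_log Finset.univ lam c fun k _ => hc k]
  exact (hderiv.tendsto_rpow_one_div_nhdsNE (by simp [hsum])).mono_left
    (nhdsWithin_mono 0 fun _ hx => ne_of_gt hx)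

/-- `lim_{x→0⁺} (∑ λₖ cₖ^x)^{1/x} = ∏ cₖ^{λₖ}` for positive `cₖ` and weights summing to 1. -/
theorem tendsto_power_mean_geometric_mean
    (n : ℕ) (c lam : Fin n → ℝ) (hc : ∀ k, 0 < c k) (hlam : ∀ k, 0 ≤ lam k)
    (hsum : (∑ k, lam k) = 1) :
    Tendsto (fun x : ℝ => (∑ k, lam k * c k ^ x) ^ (1 / x))
      (𝓝[>] 0) (𝓝 (∏ k, c k ^ lam k)) :=
  tendsto_power_mean_geometric_mean_general n c lam hc hsum
end
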